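/- Fix a field k and r ∈ ℕ. Consider the k-linear map f : A^r → k[x_1,…,x_r] defined on basis vectors by f(e_{i_1,…,i_r}) = x_1^{i_1−1} x_2^{i_2−i_1−1} ⋯ x_r^{i_r−i_{r−1}−1}. Then: (1) f is an isomorphism of k-vector spaces; and (2) for any subspace V of A^r spanned by a set of basis vectors e_t, V is a k[I]-submodule of A^r if and only if f(V) is an ideal of k[x_1,…,x_r]. In particular, f induces a bijection between the monomial k[I]-submodules of A^r and the monomial ideals of k[x_1,…,x_r]. -/

import Mathlib

open scoped Classical

noncomputable section

/-- The increasing monoid `I`: the submonoid of `Function.End ℕ+` (functions under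
composition) consisting of strictly increasing functions `σ : ℕ+ → ℕ+` such that
`σ n = n + ℓ` for some `ℓ` and all sufficiently large `n`. -/
def IncMonoid : Submonoid (Function.End ℕ+) where
  carrier := {f | StrictMono f ∧ ∃ (l : ℕ) (N : ℕ+), ∀ n : ℕ+, N ≤ n → ((f n : ℕ) = (n : ℕ) + l)}
  one_mem' := ⟨fun _ _ h => h, 0, 1, fun n _ => by show ((n : ℕ+) : ℕ) = (n : ℕ) + 0; omega⟩
  mul_mem' := by
    rintro f g ⟨hf1, lf, Nf, hf2⟩ ⟨hg1, lg, Ng, hg2⟩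
    refine ⟨hf1.comp hg1, lg + lf, max Nf Ng, fun n hn => ?_⟩
    have h1 : (g n : ℕ) = (n : ℕ) + lg := hg2 n (le_trans (le_max_right _ _) hn)
    have h2 : Nf ≤ g n := by
      rw [← PNat.coe_le_coe, h1]
      have : (Nf : ℕ) ≤ (n : ℕ) := (PNat.coe_le_coe _ _).2 (le_trans (le_max_left _ _) hn)
      omega
    have h3 := hf2 (g n) h2
    show ((f (g n) : ℕ)) = (n : ℕ) + (lg + lf)
    omega

/-- The increasing monoid, as a type. -/
abbrev IncM : Type := IncMonoid

theorem IncM.strictMono (σ : IncM) : StrictMono σ.1 := σ.2.1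

theorem IncM.le_apply (σ : IncM) (n : ℕ+) : n ≤ σ.1 n := by
  induction n using PNat.recOn with
  | one => exact (σ.1 1).one_le
  | succ n ih =>
      have h2 : σ.1 n < σ.1 (n + 1) := σ.strictMono (by rw [← PNat.coe_lt_coe]; push_cast; omega)
      rw [← PNat.coe_le_coe] at *
      rw [← PNat.coe_lt_coe] at h2
      push_cast at *
      omega

/-- The underlying function of the generator `α_k`. -/
def alphaFun (k : ℕ+) : Function.End ℕ+ := fun n => if n < k then n else n + 1

theorem alphaFun_strictMono (k : ℕ+) : StrictMono (alphaFun k) := by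
  intro a b hab
  unfold alphaFun
  split_ifs with h1 h2 <;>
    rw [← PNat.coe_lt_coe] at * <;> push_cast at * <;> omega

theorem alphaFun_mem (k : ℕ+) : alphaFun k ∈ IncMonoid := by
  refine ⟨alphaFun_strictMono k, 1, k, fun n hn => ?_⟩
  unfold alphaFun
  rw [if_neg (not_lt.2 hn)]
  push_cast
  ring

/-- The generator `α_k` of the increasing monoid (`k ≥ 1`). -/
def alpha (k : ℕ+) : IncM := ⟨alphaFun k, alphaFun_mem k⟩

/-- The submonoid `I_{≥ n}` of `I` generated by the `α_i` with `i ≥ n`. -/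
def Iges (n : ℕ+) : Submonoid IncM := Submonoid.closure (alpha '' Set.Ici n)

/-- The submonoid `I_{> n}` of `I` generated by the `α_i` with `i > n`. -/
def Igt (n : ℕ) : Submonoid IncM := Submonoid.closure {s | ∃ i : ℕ+, n < (i : ℕ) ∧ s = alpha i}

/-- The monoid algebra `k[I]` of the increasing monoid. -/
abbrev IncAlg (k : Type*) [Field k] : Type _ := MonoidAlgebra k IncM

/-- The image of `σ ∈ I` in the monoid algebra `k[I]`. -/
abbrev ofInc (k : Type*) [Field k] (σ : IncM) : IncAlg k := MonoidAlgebra.of k IncM σ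

/-- A `k[I]`-module is smooth if every vector is fixed by some `I_{>n}`. -/
def IsSmoothMod (k : Type*) [Field k] (M : Type*) [AddCommMonoid M]
    [Module (IncAlg k) M] : Prop :=
  ∀ x : M, ∃ n : ℕ, ∀ σ ∈ Igt n, ofInc k σ • x = x

/-! ### The principal modules `A^r` -/

/-- Index set for the basis of the principal module `A^r`:
strictly increasing `r`-tuples of positive integers. -/
def Idx (r : ℕ) : Type := {v : Fin r → ℕ+ // StrictMono v}

/-- The action of `σ ∈ I` on the index set of `A^r`. -/
def idxAct {r : ℕ} (σ : IncM) (t : Idx r) : Idx r :=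
  ⟨σ.1 ∘ t.1, (IncM.strictMono σ).comp t.2⟩

/-- The representation of the increasing monoid on the principal module `A^r`. -/
def prinRep (k : Type*) [Field k] (r : ℕ) : Representation k IncM (Idx r →₀ k) where
  toFun σ := Finsupp.lmapDomain k k (idxAct σ)
  map_one' := LinearMap.ext fun v => by
    have h : (idxAct (1 : IncM) : Idx r → Idx r) = id := funext fun t => rfl
    simp [Finsupp.lmapDomain_apply, h, Finsupp.mapDomain_id]
  map_mul' := fun σ τ => LinearMap.ext fun v => by
    have h : (idxAct (σ * τ) : Idx r → Idx r) = (idxAct σ) ∘ (idxAct τ) :=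
      funext fun t => rfl
    show Finsupp.lmapDomain k k (idxAct (σ * τ)) v =
      Finsupp.lmapDomain k k (idxAct σ) (Finsupp.lmapDomain k k (idxAct τ) v)
    simp [Finsupp.lmapDomain_apply, h, Finsupp.mapDomain_comp]

/-- The principal module `A^r`, as a module over the monoid algebra `k[I]`. -/
abbrev PrinMod (k : Type*) [Field k] (r : ℕ) : Type _ := (prinRep k r).asModule

/-- The basis vector `e_t` of the principal module `A^r`. -/
def ePrin (k : Type*) [Field k] {r : ℕ} (t : Idx r) : PrinMod k r :=
  (prinRep k r).asModuleEquiv.symm (Finsupp.single t 1)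

/-- The tuple `(1, 2, …, r)` indexing the canonical generator `e_{1,…,r}` of `A^r`. -/
def iotaIdx (r : ℕ) : Idx r :=
  ⟨fun i => ⟨(i : ℕ) + 1, Nat.succ_pos _⟩, fun a b h => by
    first
      | (rw [← PNat.coe_lt_coe]; simp only [PNat.mk_coe]; exact Nat.succ_lt_succ h)
      | (show (a : ℕ) + 1 < (b : ℕ) + 1; exact Nat.succ_lt_succ h)⟩

/-! ### The simple modules `B^n` -/

/-- `σ ∈ I` fixes the natural number `n`, with the convention `σ 0 = 0`. -/
def fixesNat (σ : IncM) (n : ℕ) : Prop := ∀ h : 0 < n, σ.1 ⟨n, h⟩ = ⟨n, h⟩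

theorem fixesNat_mul (σ τ : IncM) (n : ℕ) :
    fixesNat (σ * τ) n ↔ fixesNat σ n ∧ fixesNat τ n := by
  rcases Nat.eq_zero_or_pos n with h0 | h0
  · subst h0
    constructor
    · exact fun _ => ⟨fun h => absurd h (lt_irrefl 0), fun h => absurd h (lt_irrefl 0)⟩
    · exact fun _ h => absurd h (lt_irrefl 0)
  · set p : ℕ+ := ⟨n, h0⟩
    have happ : ∀ h : 0 < n, (σ * τ).1 ⟨n, h⟩ = σ.1 (τ.1 ⟨n, h⟩) := fun _ => rfl
    constructor
    · intro h
      have hfix : σ.1 (τ.1 p) = p := h h0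
      have h1 : p ≤ τ.1 p := τ.le_apply p
      have h2 : τ.1 p ≤ σ.1 (τ.1 p) := σ.le_apply _
      have hτp : τ.1 p = p := le_antisymm (h2.trans_eq hfix) h1
      have hσp : σ.1 p = p := by rw [hτp] at hfix; exact hfix
      exact ⟨fun _ => hσp, fun _ => hτp⟩
    · rintro ⟨hσ, hτ⟩ h
      rw [happ h]
      have := hτ h0
      rw [this, hσ h0]

/-- The representation of the increasing monoid on the simple module `B^n`:
`σ` acts by the identity if `σ(n) = n` (with `σ(0) = 0`) and by `0` otherwise. -/
def bRep (k : Type*) [Field k] (n : ℕ) : Representation k IncM k where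
  toFun σ := if fixesNat σ n then 1 else 0
  map_one' := by
    try dsimp only
    rw [if_pos]
    intro h
    rfl
  map_mul' := fun σ τ => by
    try dsimp only
    by_cases hσ : fixesNat σ n
    · by_cases hτ : fixesNat τ n
      · rw [if_pos ((fixesNat_mul σ τ n).2 ⟨hσ, hτ⟩), if_pos hσ, if_pos hτ, one_mul]
      · rw [if_neg (fun h => hτ ((fixesNat_mul σ τ n).1 h).2), if_pos hσ, if_neg hτ, one_mul]
    · by_cases hτ : fixesNat τ n
      · rw [if_neg (fun h => hσ ((fixesNat_mul σ τ n).1 h).1), if_neg hσ, if_pos hτ, mul_one]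
      · rw [if_neg (fun h => hσ ((fixesNat_mul σ τ n).1 h).1), if_neg hσ, if_neg hτ, mul_zero]

/-- The simple module `B^n`, as a module over the monoid algebra `k[I]`. -/
abbrev BMod (k : Type*) [Field k] (n : ℕ) : Type _ := (bRep k n).asModule

/-- The value of the tuple `t` at the position preceding `j` (and `0` for `j` the
first position). -/
def prevVal {r : ℕ} (t : Idx r) (j : Fin r) : ℕ :=
  if h : (j : ℕ) = 0 then 0
  else (t.1 ⟨(j : ℕ) - 1, Nat.lt_of_le_of_lt (Nat.sub_le _ _) j.isLt⟩ : ℕ)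

/-- The exponent vector associated to a basis index of `A^r`:
`(i_1, …, i_r) ↦ (i_1 - 1, i_2 - i_1 - 1, …, i_r - i_{r-1} - 1)`. -/
def expOf {r : ℕ} (t : Idx r) : Fin r →₀ ℕ :=
  Finsupp.equivFunOnFinite.symm fun j => (t.1 j : ℕ) - prevVal t j - 1

/-- The `k`-linear map `A^r → k[x_1,…,x_r]` sending
`e_{i_1,…,i_r}` to `x_1^{i_1-1} x_2^{i_2-i_1-1} ⋯ x_r^{i_r-i_{r-1}-1}`. -/
def prinToPoly (k : Type*) [Field k] (r : ℕ) :
    (Idx r →₀ k) →ₗ[k] MvPolynomial (Fin r) k :=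
  Finsupp.lift (MvPolynomial (Fin r) k) k (Idx r) fun t =>
    MvPolynomial.monomial (expOf t) (1 : k)

/-! The exponent map `expOf` is a bijection from the basis indices of `A^r` onto the monomials
(its inverse takes partial sums of `m + 1`), so `f` is an isomorphism carrying the span of the
basis vectors indexed by `S` onto the span of the monomials with exponents in `E = expOf '' S`;
such a span is an ideal iff `E` is an upper set. On the module side, a strictly increasing `σ`
can only widen the gaps of a tuple, so `expOf t ≤ expOf (σ t)`, while the generator `α_{t_i}`
raises exactly the `i`-th exponent of `t` by one. Hence `S` is `I`-stable iff `E` is an upper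
set. -/

theorem PNat.sub_le_sub_of_strictMono {f : ℕ+ → ℕ+} (hf : StrictMono f) {a b : ℕ+}
    (hab : a ≤ b) : (b : ℕ) - a ≤ (f b : ℕ) - f a := by
  induction b using PNat.recOn with
  | one => simp [le_antisymm hab one_le]
  | succ b ih =>
    rcases hab.eq_or_lt with rfl | hlt
    · simp
    · have hab : a ≤ b := PNat.lt_add_one_iff.1 hlt
      have hstep : (f b : ℕ) < f (b + 1) := hf (PNat.lt_add_right b 1)
      have hmono : (f a : ℕ) ≤ f b := hf.monotone hab
      have hab' : (a : ℕ) ≤ b := hab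
      have := ih hab
      push_cast
      omega

theorem Fin.sum_Iio_eq_dite {M : Type*} [AddCommMonoid M] {r : ℕ} (f : Fin r → M) (j : Fin r) :
    ∑ i ∈ Finset.Iio j, f i =
      if h : (j : ℕ) = 0 then 0 else ∑ i ∈ Finset.Iic ⟨(j : ℕ) - 1, by omega⟩, f i := by
  split_ifs with h
  · refine Finset.sum_eq_zero fun i hi => ?_
    rw [Finset.mem_Iio, Fin.lt_def] at hi
    omega
  · congr 1
    ext i
    rw [Finset.mem_Iio, Finset.mem_Iic, Fin.lt_def, Fin.le_def]
    dsimp only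
    omega

namespace Finsupp

theorem mapsTo_lmapDomain_supported_iff {α β R : Type*} [Semiring R] [Nontrivial R]
    {f : α → β} {s : Set α} {t : Set β} :
    Set.MapsTo (lmapDomain R R f) (supported R R s) (supported R R t) ↔ Set.MapsTo f s t := by
  refine ⟨fun h a ha => ?_, fun h v hv => ?_⟩
  · have := h (single_mem_supported R (1 : R) ha)
    rwa [SetLike.mem_coe, lmapDomain_apply, mapDomain_single, mem_supported,
      support_single _ one_ne_zero, Finset.coe_singleton, Set.singleton_subset_iff] at this
  · exact supported_mono h.image_subset
      (lmapDomain_supported R R f s ▸ Submodule.mem_map_of_mem hv)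

theorem isUpperSet_of_add_single_mem {ι : Type*} {E : Set (ι →₀ ℕ)}
    (h : ∀ m ∈ E, ∀ i, m + single i 1 ∈ E) : IsUpperSet E := by
  have add_single_mem : ∀ i n, ∀ m ∈ E, m + single i n ∈ E := by
    intro i n
    induction n with
    | zero => simp
    | succ n ih =>
      intro m hm
      simpa [single_add, add_assoc] using h _ (ih m hm) i
  have add_mem : ∀ d, ∀ m ∈ E, m + d ∈ E := by
    intro d
    induction d using Finsupp.induction with
    | zero => simp
    | single_add i n d _ _ ih =>
      intro m hm
      rw [add_comm (single i n) d, ← add_assoc]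
      exact add_single_mem i n _ (ih m hm)
  intro a b hab ha
  simpa [add_tsub_cancel_of_le hab] using add_mem (b - a) a ha

end Finsupp

theorem MvPolynomial.exists_ideal_coe_eq_restrictSupport_iff {σ R : Type*} [CommSemiring R]
    [Nontrivial R] {E : Set (σ →₀ ℕ)} :
    (∃ J : Ideal (MvPolynomial σ R), (J : Set (MvPolynomial σ R)) = restrictSupport R E) ↔
      IsUpperSet E := by
  refine ⟨?_, fun hE => ⟨restrictSupportIdeal R E hE, rfl⟩⟩
  rintro ⟨J, hJ⟩ m m' hle hm
  have mem_iff : ∀ n, n ∈ E ↔ monomial n (1 : R) ∈ J := fun n => by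
    rw [← SetLike.mem_coe, hJ, SetLike.mem_coe, monomial_mem_restrictSupport]
    simp
  have := J.mul_mem_left (monomial (m' - m) 1) ((mem_iff m).1 hm)
  rwa [monomial_mul, one_mul, tsub_add_cancel_of_le hle, ← mem_iff] at this

namespace Idx

variable {r : ℕ}

theorem expOf_apply (t : Idx r) (j : Fin r) : expOf t j = (t.1 j : ℕ) - prevVal t j - 1 := rfl

def ofExp (m : Fin r →₀ ℕ) : Idx r :=
  ⟨fun j => ⟨∑ i ∈ Finset.Iic j, (m i + 1),
      Finset.sum_pos (fun _ _ => Nat.succ_pos _) Finset.nonempty_Iic⟩,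
    fun a b hab => PNat.coe_lt_coe _ _ |>.1 <|
      Finset.sum_lt_sum_of_subset (Finset.Iic_subset_Iic.2 hab.le) (Finset.mem_Iic.2 le_rfl)
        (by simpa using hab) (Nat.succ_pos _) fun _ _ _ => Nat.zero_le _⟩

theorem coe_ofExp_apply (m : Fin r →₀ ℕ) (j : Fin r) :
    ((ofExp m).1 j : ℕ) = ∑ i ∈ Finset.Iic j, (m i + 1) := rfl

theorem expOf_ofExp (m : Fin r →₀ ℕ) : expOf (ofExp m) = m := by
  ext j
  have hprev : prevVal (ofExp m) j = ∑ i ∈ Finset.Iio j, (m i + 1) := by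
    rw [Fin.sum_Iio_eq_dite, prevVal]
    rfl
  rw [expOf_apply, hprev, coe_ofExp_apply, Finset.Iic_eq_cons_Iio, Finset.sum_cons]
  omega

theorem coe_apply_eq_sum_expOf (t : Idx r) (j : Fin r) :
    (t.1 j : ℕ) = ∑ i ∈ Finset.Iic j, (expOf t i + 1) := by
  induction j using WellFoundedLT.induction with
  | ind j ih =>
    rw [Finset.Iic_eq_cons_Iio, Finset.sum_cons, Fin.sum_Iio_eq_dite, expOf_apply, prevVal]
    split_ifs with h
    · have := (t.1 j).pos
      omega
    · have hlt : (t.1 ⟨(j : ℕ) - 1, by omega⟩ : ℕ) < t.1 j :=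
        (PNat.coe_lt_coe _ _).2 (t.2 (Fin.lt_def.2 (by dsimp only; omega)))
      rw [← ih _ (Fin.lt_def.2 (by dsimp only; omega))]
      omega

theorem ofExp_expOf (t : Idx r) : ofExp (expOf t) = t :=
  Subtype.ext <| funext fun j => PNat.coe_injective (coe_apply_eq_sum_expOf t j).symm

def expEquiv : Idx r ≃ (Fin r →₀ ℕ) := ⟨expOf, ofExp, ofExp_expOf, expOf_ofExp⟩

theorem coe_ofExp_add_single_apply (m : Fin r →₀ ℕ) (i j : Fin r) :
    ((ofExp (m + Finsupp.single i 1)).1 j : ℕ) = (ofExp m).1 j + if i ≤ j then 1 else 0 := by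
  simp [coe_ofExp_apply, Finsupp.single_apply, Finset.sum_add_distrib, add_right_comm]

theorem expOf_idxAct_alpha (t : Idx r) (i : Fin r) :
    expOf (idxAct (alpha (t.1 i)) t) = expOf t + Finsupp.single i 1 := by
  rw [← expOf_ofExp (expOf t + Finsupp.single i 1)]
  congr 1
  refine Subtype.ext <| funext fun j => PNat.coe_injective ?_
  rw [coe_ofExp_add_single_apply, ofExp_expOf]
  show ((alphaFun (t.1 i) (t.1 j)) : ℕ) = _
  unfold alphaFun
  split_ifs with hji hij hij
  · exact absurd (t.2.monotone hij) (not_le.2 hji)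
  · rfl
  · rfl
  · exact absurd (t.2 (not_le.1 hij)) hji

theorem expOf_le_expOf_idxAct (σ : IncM) (t : Idx r) : expOf t ≤ expOf (idxAct σ t) := by
  intro j
  simp only [expOf_apply, prevVal]
  split_ifs with h
  · have hle : (t.1 j : ℕ) ≤ σ.1 (t.1 j) := (PNat.coe_le_coe _ _).2 (σ.le_apply _)
    exact Nat.sub_le_sub_right hle 1
  · exact Nat.sub_le_sub_right (PNat.sub_le_sub_of_strictMono σ.strictMono
      (t.2.monotone (Fin.le_def.2 (by dsimp only; omega)))) 1

theorem mapsTo_idxAct_iff_isUpperSet (S : Set (Idx r)) :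
    (∀ σ : IncM, Set.MapsTo (idxAct σ) S S) ↔ IsUpperSet (expOf '' S) := by
  refine ⟨fun h => Finsupp.isUpperSet_of_add_single_mem ?_, fun hS σ t ht => ?_⟩
  · rintro _ ⟨t, ht, rfl⟩ i
    exact ⟨_, h _ ht, expOf_idxAct_alpha t i⟩
  · obtain ⟨t', ht', he⟩ := hS (expOf_le_expOf_idxAct σ t) ⟨t, ht, rfl⟩
    rwa [expEquiv.injective he] at ht'

end Idx

section PrincipalModule

variable (k : Type*) [Field k] (r : ℕ)

theorem prinToPoly_single (t : Idx r) :
    prinToPoly k r (Finsupp.single t 1) = MvPolynomial.monomial (expOf t) 1 := by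
  simp [prinToPoly]

theorem prinToPoly_eq_basis_equiv :
    prinToPoly k r =
      (Finsupp.basisSingleOne.equiv (MvPolynomial.basisMonomials (Fin r) k)
        Idx.expEquiv).toLinearMap :=
  Finsupp.basisSingleOne.ext fun t => by
    rw [LinearEquiv.coe_coe, Module.Basis.equiv_apply, Finsupp.coe_basisSingleOne,
      MvPolynomial.coe_basisMonomials, prinToPoly_single]
    rfl

theorem prinToPoly_bijective : Function.Bijective (prinToPoly k r) := by
  rw [prinToPoly_eq_basis_equiv]
  exact LinearEquiv.bijective _

theorem image_prinToPoly_supported (S : Set (Idx r)) :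
    prinToPoly k r '' Finsupp.supported k k S = MvPolynomial.restrictSupport k (expOf '' S) := by
  rw [← Submodule.map_coe, Finsupp.supported_eq_span_single, Submodule.map_span, Set.image_image,
    MvPolynomial.restrictSupport_eq_span, Set.image_image]
  simp only [prinToPoly_single]

theorem prinRep_apply (σ : IncM) : prinRep k r σ = Finsupp.lmapDomain k k (idxAct σ) := rfl

end PrincipalModule

/-- The map `f : A^r → k[x_1,…,x_r]` is a linear isomorphism, and a
subspace `V` spanned by basis vectors is a `k[I]`-submodule if and only if `f(V)` is
an ideal of the polynomial ring. -/
theorem principal_module_monomial_ideal_correspondence (k : Type*) [Field k] (r : ℕ) :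
    Function.Bijective (prinToPoly k r) ∧
    ∀ S : Set (Idx r),
      ((∀ σ : IncM, ∀ v ∈ Submodule.span k ((fun t => Finsupp.single t (1 : k)) '' S),
          prinRep k r σ v ∈ Submodule.span k ((fun t => Finsupp.single t (1 : k)) '' S)) ↔
        ∃ J : Ideal (MvPolynomial (Fin r) k),
          (J : Set (MvPolynomial (Fin r) k)) =
            prinToPoly k r ''
              (Submodule.span k ((fun t => Finsupp.single t (1 : k)) '' S))) := by
  refine ⟨prinToPoly_bijective k r, fun S => ?_⟩
  simp only [← Finsupp.supported_eq_span_single, image_prinToPoly_supported,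
    MvPolynomial.exists_ideal_coe_eq_restrictSupport_iff, ← Idx.mapsTo_idxAct_iff_isUpperSet,
    prinRep_apply]
  exact forall_congr' fun σ => Finsupp.mapsTo_lmapDomain_supported_iff

end
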